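/- arXiv:1508.07598 — 5 statements merged into one kernel-verified Lean document; each statement's English description precedes it below -/
import Mathlib

section
/- There exists a constant C > 0 such that for every g ∈ H^1(ℝ), ∫_ℝ |g(x)|^3 dx ≤ C (sup_{y ∈ ℝ} ∫_{B(y,1/2)} (g'(x)^2 + g(x)^2) dx)^{1/2} · ‖g‖_{H^1}^2. -/
open MeasureTheory Set
open scoped Interval

/-!
On a unit interval around `x`, `g` takes a value `g y ^ 2` at most the mean of `g ^ 2`, and
`g x ^ 2 - g y ^ 2 = ∫ 2 g g'` is bounded by `∫ (g' ^ 2 + g ^ 2)` since `2 |g g'| ≤ g' ^ 2 + g ^ 2`.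
Hence `‖g‖_∞ ^ 2 ≤ 2 S`, where `S` is the supremum of the local `H¹` energies, and
`∫ |g| ^ 3 ≤ ‖g‖_∞ ∫ g ^ 2 ≤ √(2 S) ‖g‖_{H¹} ^ 2`.
-/

section LocalSobolev

variable {g g' : ℝ → ℝ} {a b : ℝ}

theorem memLp_two_Icc_of_continuousOn (hg : ContinuousOn g (Icc a b)) :
    MemLp g 2 (volume.restrict (Icc a b)) :=
  (memLp_two_iff_integrable_sq (hg.aestronglyMeasurable measurableSet_Icc)).2
    ((hg.pow 2).integrableOn_Icc)

theorem abs_sq_sub_sq_le_integral_Icc {x y : ℝ} (hx : x ∈ Icc a b) (hy : y ∈ Icc a b)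
    (hd : ∀ t ∈ Icc a b, HasDerivAt g (g' t) t) (hg' : MemLp g' 2 (volume.restrict (Icc a b))) :
    |g x ^ 2 - g y ^ 2| ≤ ∫ t in Icc a b, (g' t ^ 2 + g t ^ 2) := by
  have hgc : ContinuousOn g (Icc a b) := fun t ht => (hd t ht).continuousAt.continuousWithinAt
  have hg := memLp_two_Icc_of_continuousOn hgc
  have hsub : uIcc y x ⊆ Icc a b := uIcc_subset_Icc hy hx
  have hprod : IntegrableOn (fun t => 2 * g t * g' t) (Icc a b) := by
    simpa only [IntegrableOn, Pi.mul_apply, mul_assoc] using (hg.integrable_mul hg').const_mul 2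
  have hftc : ∫ t in y..x, 2 * g t * g' t = g x ^ 2 - g y ^ 2 := by
    refine intervalIntegral.integral_eq_sub_of_hasDerivAt (f := fun t => g t ^ 2) (fun t ht => ?_)
      ((hprod.mono_set hsub).intervalIntegrable)
    simpa [mul_comm, mul_left_comm] using (hd t (hsub ht)).fun_pow 2
  rw [← hftc]
  calc ‖∫ t in y..x, 2 * g t * g' t‖
      ≤ ∫ t in Ι y x, ‖2 * g t * g' t‖ := intervalIntegral.norm_integral_le_integral_norm_uIoc
    _ ≤ ∫ t in Icc a b, ‖2 * g t * g' t‖ :=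
        setIntegral_mono_set hprod.norm (.of_forall fun _ => norm_nonneg _)
          (.of_forall (uIoc_subset_uIcc.trans hsub))
    _ ≤ ∫ t in Icc a b, (g' t ^ 2 + g t ^ 2) := by
        refine setIntegral_mono_on hprod.norm (hg'.integrable_sq.add hg.integrable_sq)
          measurableSet_Icc fun t _ => ?_
        rw [Real.norm_eq_abs, abs_mul, abs_mul, abs_two, ← sq_abs (g t), ← sq_abs (g' t), add_comm]
        exact two_mul_le_add_sq _ _

theorem sq_le_one_add_inv_mul_integral_Ioo {x : ℝ} (hab : a < b) (hx : x ∈ Icc a b)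
    (hd : ∀ t ∈ Icc a b, HasDerivAt g (g' t) t) (hg' : MemLp g' 2 (volume.restrict (Icc a b))) :
    g x ^ 2 ≤ (1 + (b - a)⁻¹) * ∫ t in Ioo a b, (g' t ^ 2 + g t ^ 2) := by
  have hg := memLp_two_Icc_of_continuousOn fun t ht => (hd t ht).continuousAt.continuousWithinAt
  have hvol : volume (Icc a b) = ENNReal.ofReal (b - a) := Real.volume_Icc
  obtain ⟨y, hy, hy_le⟩ := exists_le_setAverage (f := fun t => g t ^ 2)
    (by simp [hvol, hab]) (by simp [hvol]) hg.integrable_sq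
  have hy_avg : g y ^ 2 ≤ (b - a)⁻¹ * ∫ t in Icc a b, (g' t ^ 2 + g t ^ 2) := by
    rw [setAverage_eq, Real.volume_real_Icc_of_le hab.le, smul_eq_mul] at hy_le
    refine hy_le.trans (mul_le_mul_of_nonneg_left ?_ (inv_nonneg.2 (sub_nonneg.2 hab.le)))
    exact setIntegral_mono_on hg.integrable_sq (hg'.integrable_sq.add hg.integrable_sq)
      measurableSet_Icc fun t _ => le_add_of_nonneg_left (sq_nonneg _)
  have hxy := (abs_le.1 (abs_sq_sub_sq_le_integral_Icc hx hy hd hg')).2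
  rw [← integral_Icc_eq_integral_Ioo]
  linarith

end LocalSobolev

theorem integral_abs_pow_three_le {α : Type*} [MeasurableSpace α] {μ : Measure α} {f : α → ℝ}
    {M : ℝ} (hf : Integrable (fun x => f x ^ 2) μ) (hM : ∀ x, f x ^ 2 ≤ M) :
    ∫ x, |f x| ^ 3 ∂μ ≤ √M * ∫ x, f x ^ 2 ∂μ := by
  rw [← integral_const_mul]
  refine integral_mono_of_nonneg (.of_forall fun x => by positivity) (hf.const_mul _)
    (.of_forall fun x => ?_)
  calc |f x| ^ 3 = |f x| * f x ^ 2 := by rw [← sq_abs (f x)]; ring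
    _ ≤ √M * f x ^ 2 := by gcongr; exact Real.abs_le_sqrt (hM x)

theorem stmt_1 :
    ∃ C > 0, ∀ (g g' : ℝ → ℝ),
      (∀ x, HasDerivAt g (g' x) x) → MemLp g 2 (volume : Measure ℝ) →
      MemLp g' 2 (volume : Measure ℝ) →
      ∫ x : ℝ, |g x| ^ 3 ≤
        C * Real.sqrt (⨆ y : ℝ, ∫ x in Ioo (y - 1/2) (y + 1/2), (g' x ^ 2 + g x ^ 2))
          * ∫ x : ℝ, (g' x ^ 2 + g x ^ 2) := by
  refine ⟨2, two_pos, fun g g' hd hg hg' => ?_⟩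
  have hE : Integrable (fun x => g' x ^ 2 + g x ^ 2) := hg'.integrable_sq.add hg.integrable_sq
  set S := ⨆ y : ℝ, ∫ x in Ioo (y - 1/2) (y + 1/2), (g' x ^ 2 + g x ^ 2)
  have hS : ∀ y, ∫ x in Ioo (y - 1/2) (y + 1/2), (g' x ^ 2 + g x ^ 2) ≤ S := le_ciSup
    ⟨_, by rintro _ ⟨y, rfl⟩; exact setIntegral_le_integral hE (.of_forall fun x => by positivity)⟩
  have hg_sq_le : ∀ x, g x ^ 2 ≤ 2 * S := fun x => by
    have hx := sq_le_one_add_inv_mul_integral_Ioo (x := x) (by linarith) ⟨by linarith, by linarith⟩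
      (fun t _ => hd t) (hg'.restrict (Icc (x - 1/2) (x + 1/2)))
    rw [show (1 + (x + 1/2 - (x - 1/2))⁻¹ : ℝ) = 2 by norm_num] at hx
    linarith [hS x]
  calc ∫ x, |g x| ^ 3 ≤ √2 * √S * ∫ x, g x ^ 2 := by
        rw [← Real.sqrt_mul zero_le_two]; exact integral_abs_pow_three_le hg.integrable_sq hg_sq_le
    _ ≤ 2 * √S * ∫ x, (g' x ^ 2 + g x ^ 2) := by
        refine mul_le_mul (mul_le_mul_of_nonneg_right ?_ (Real.sqrt_nonneg S))
          (integral_mono hg.integrable_sq hE fun x => le_add_of_nonneg_left (sq_nonneg _))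
          (integral_nonneg fun x => sq_nonneg _) (by positivity)
        exact Real.sqrt_le_iff.2 ⟨zero_le_two, by norm_num⟩
end

section
/- There exists a constant C > 0 such that for all f, g ∈ H^1(ℝ), ∫_ℝ |g(x)| f(x)^2 dx ≤ C (sup_{y ∈ ℝ} ∫_{B(y,1/2)} (f'^2 + f^2 + g'^2 + g^2) dx)^{1/2} · (‖f‖_{H^1}^2 + ‖g‖_{H^1}^2). -/
/-!
On a window `[a, b]` the square `g²` takes, at some point `t`, a value at most its mean, and
`g(x)² - g(t)² = ∫ₜˣ 2 g g'` with `|2 g g'| ≤ g'² + g²`. On unit windows this gives the uniform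
bound `g(x)² ≤ 2 sup_y ∫_{B(y,1/2)} (g'² + g²)`, and then
`∫ |g| f² ≤ ‖g‖_∞ ‖f‖₂² ≤ √2 · (sup …)^{1/2} · ‖f‖_{H¹}²`.
-/

open MeasureTheory Set

lemma abs_two_mul_mul_le_sq_add_sq (a b : ℝ) : |2 * a * b| ≤ b ^ 2 + a ^ 2 := by
  rw [abs_mul, abs_mul, abs_two, ← sq_abs a, ← sq_abs b]
  linarith [two_mul_le_add_sq |a| |b|]

lemma setIntegral_le_iSup_setIntegral {α ι : Type*} [MeasurableSpace α] {μ : Measure α}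
    {h : α → ℝ} (hh : Integrable h μ) (h0 : 0 ≤ᵐ[μ] h) (s : ι → Set α) (i : ι) :
    ∫ x in s i, h x ∂μ ≤ ⨆ j, ∫ x in s j, h x ∂μ :=
  le_ciSup (f := fun j => ∫ x in s j, h x ∂μ)
    ⟨∫ x, h x ∂μ, by rintro _ ⟨j, rfl⟩; exact setIntegral_le_integral hh h0⟩ i

lemma abs_sub_le_setIntegral_abs_of_hasDerivAt {F F' : ℝ → ℝ} {a b s t : ℝ}
    (hF : ∀ x, HasDerivAt F (F' x) x) (hF' : IntegrableOn F' (Icc a b))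
    (hs : s ∈ Icc a b) (ht : t ∈ Icc a b) :
    |F t - F s| ≤ ∫ x in Icc a b, |F' x| := by
  have hsub : uIcc s t ⊆ Icc a b := ordConnected_Icc.uIcc_subset hs ht
  rw [← intervalIntegral.integral_eq_sub_of_hasDerivAt (fun x _ => hF x)
    ((hF'.mono_set hsub).intervalIntegrable)]
  calc |∫ x in s..t, F' x| ≤ ∫ x in uIoc s t, |F' x| := by
        simpa only [Real.norm_eq_abs] using
          intervalIntegral.norm_integral_le_integral_norm_uIoc (f := F')
    _ ≤ ∫ x in Icc a b, |F' x| :=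
        setIntegral_mono_set hF'.abs (Filter.Eventually.of_forall fun _ => abs_nonneg _)
          (uIoc_subset_uIcc.trans hsub).eventuallyLE

lemma sq_le_setIntegral_of_hasDerivAt {g g' : ℝ → ℝ} {a b x : ℝ} (hab : a < b)
    (hg : ∀ x, HasDerivAt g (g' x) x) (hg' : IntegrableOn (fun t => g' t ^ 2) (Icc a b))
    (hx : x ∈ Icc a b) :
    g x ^ 2 ≤ (b - a)⁻¹ * (∫ t in Icc a b, g t ^ 2) + ∫ t in Icc a b, (g' t ^ 2 + g t ^ 2) := by
  have hcont : Continuous g := continuous_iff_continuousAt.2 fun x => (hg x).continuousAt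
  have hg2 : IntegrableOn (fun t => g t ^ 2) (Icc a b) := (hcont.pow 2).integrableOn_Icc
  have hg'_eq : g' = deriv g := funext fun x => (hg x).deriv.symm
  have hgg' : IntegrableOn (fun t => 2 * g t * g' t) (Icc a b) :=
    (hg'.add hg2).mono'
      ((hcont.const_mul 2).aestronglyMeasurable.mul
        (hg'_eq ▸ (measurable_deriv g).aestronglyMeasurable))
      (Filter.Eventually.of_forall fun t => abs_two_mul_mul_le_sq_add_sq (g t) (g' t))
  have hvol : volume.real (Icc a b) = b - a := by simp [hab.le]
  obtain ⟨t, ht, hgt⟩ := exists_le_setAverage (by simp [hab]) (by simp) hg2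
  rw [setAverage_eq, hvol, smul_eq_mul] at hgt
  have hsq : ∀ y, HasDerivAt (fun y => g y ^ 2) (2 * g y * g' y) y := fun y => by
    simpa using (hg y).fun_pow 2
  have hftc : |g x ^ 2 - g t ^ 2| ≤ ∫ y in Icc a b, (g' y ^ 2 + g y ^ 2) :=
    (abs_sub_le_setIntegral_abs_of_hasDerivAt hsq hgg' ht hx).trans
      (setIntegral_mono_on hgg'.abs (hg'.add hg2) measurableSet_Icc
        fun y _ => abs_two_mul_mul_le_sq_add_sq (g y) (g' y))
  linarith [le_abs_self (g x ^ 2 - g t ^ 2)]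

lemma sq_le_two_mul_iSup_setIntegral_Ioo {g g' h : ℝ → ℝ}
    (hg : ∀ x, HasDerivAt g (g' x) x) (hg' : LocallyIntegrable (fun t => g' t ^ 2))
    (hh : Integrable h) (hgh : ∀ t, g' t ^ 2 + g t ^ 2 ≤ h t) (x : ℝ) :
    g x ^ 2 ≤ 2 * ⨆ y, ∫ t in Ioo (y - 1/2) (y + 1/2), h t := by
  have hg2 : IntegrableOn (fun t => g t ^ 2) (Icc (x - 1/2) (x + 1/2)) :=
    ((continuous_iff_continuousAt.2 fun x => (hg x).continuousAt).pow 2).integrableOn_Icc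
  have hg'2 := hg'.integrableOn_isCompact (isCompact_Icc (a := x - 1/2) (b := x + 1/2))
  have hwin := sq_le_setIntegral_of_hasDerivAt (by linarith : x - 1/2 < x + 1/2) hg hg'2
    (x := x) ⟨by linarith, by linarith⟩
  rw [show x + 1/2 - (x - 1/2) = 1 by ring, inv_one, one_mul] at hwin
  have hg2_le : ∫ t in Icc (x - 1/2) (x + 1/2), g t ^ 2 ≤ ∫ t in Icc (x - 1/2) (x + 1/2), h t :=
    setIntegral_mono hg2 hh.integrableOn fun t =>
      (le_add_of_nonneg_left (sq_nonneg (g' t))).trans (hgh t)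
  have henergy_le : ∫ t in Icc (x - 1/2) (x + 1/2), (g' t ^ 2 + g t ^ 2) ≤
      ∫ t in Icc (x - 1/2) (x + 1/2), h t :=
    setIntegral_mono (hg'2.add hg2) hh.integrableOn hgh
  have hwindow_le := setIntegral_le_iSup_setIntegral hh
    (ae_of_all _ fun t => (by positivity : 0 ≤ g' t ^ 2 + g t ^ 2).trans (hgh t))
    (fun y => Ioo (y - 1/2) (y + 1/2)) x
  rw [← integral_Icc_eq_integral_Ioo] at hwindow_le
  linarith

theorem stmt_2 :
    ∃ C > 0, ∀ (f f' g g' : ℝ → ℝ),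
      (∀ x, HasDerivAt f (f' x) x) → MemLp f 2 (volume : Measure ℝ) →
      MemLp f' 2 (volume : Measure ℝ) →
      (∀ x, HasDerivAt g (g' x) x) → MemLp g 2 (volume : Measure ℝ) →
      MemLp g' 2 (volume : Measure ℝ) →
      ∫ x : ℝ, |g x| * f x ^ 2 ≤
        C * Real.sqrt (⨆ y : ℝ, ∫ x in Ioo (y - 1/2) (y + 1/2),
              (f' x ^ 2 + f x ^ 2 + g' x ^ 2 + g x ^ 2))
          * ((∫ x : ℝ, (f' x ^ 2 + f x ^ 2)) + ∫ x : ℝ, (g' x ^ 2 + g x ^ 2)) := by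
  refine ⟨Real.sqrt 2, by positivity, fun f f' g g' _ hf hf' hg hg2 hg' => ?_⟩
  set S := ⨆ y : ℝ, ∫ x in Ioo (y - 1/2) (y + 1/2), (f' x ^ 2 + f x ^ 2 + g' x ^ 2 + g x ^ 2)
  have hf2 := hf.integrable_sq
  have hh : Integrable fun x => f' x ^ 2 + f x ^ 2 + g' x ^ 2 + g x ^ 2 :=
    ((hf'.integrable_sq.add hf2).add hg'.integrable_sq).add hg2.integrable_sq
  have hg_abs : ∀ x, |g x| ≤ Real.sqrt 2 * Real.sqrt S := fun x => by
    rw [← Real.sqrt_mul zero_le_two]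
    apply Real.abs_le_sqrt
    exact sq_le_two_mul_iSup_setIntegral_Ioo hg hg'.integrable_sq.locallyIntegrable hh
      (fun t => by linarith [sq_nonneg (f' t), sq_nonneg (f t)]) x
  have hf_energy : ∫ x, f x ^ 2 ≤ (∫ x, (f' x ^ 2 + f x ^ 2)) + ∫ x, (g' x ^ 2 + g x ^ 2) :=
    le_add_of_le_of_nonneg
      (integral_mono hf2 (hf'.integrable_sq.add hf2) fun x => le_add_of_nonneg_left (sq_nonneg _))
      (integral_nonneg fun x => add_nonneg (sq_nonneg (g' x)) (sq_nonneg (g x)))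
  calc ∫ x, |g x| * f x ^ 2 ≤ ∫ x, Real.sqrt 2 * Real.sqrt S * f x ^ 2 :=
        integral_mono_of_nonneg (Filter.Eventually.of_forall fun x => by positivity)
          (hf2.const_mul _) (Filter.Eventually.of_forall fun x =>
            mul_le_mul_of_nonneg_right (hg_abs x) (sq_nonneg _))
    _ = Real.sqrt 2 * Real.sqrt S * ∫ x, f x ^ 2 := integral_const_mul _ _
    _ ≤ _ := mul_le_mul_of_nonneg_left hf_energy (by positivity)
end

section
/- Let σ, γ, c_τ > 0, β ≥ 0, α_j > 0 for j = 1,…,N, and λ > 0. Define K(f_1,…,f_N,g) = Σ_j ∫(f_j'^2 + σ f_j^2) dx + ∫(γ g'^2 + c_τ g^2) dx and F(f_1,…,f_N,g) = (β/3) g^3 + (Σ_j α_j f_j^2) g. Then the infimum I_λ of K over the set A_λ = {(f_1,…,f_N,g) ∈ (H^1)^{N+1} : ∫ F dx = λ} is strictly positive. -/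
/-!
For `g ∈ H¹(ℝ)` one has `g(x)² = ∫_{-∞}^x 2 g g' ≤ ‖g'‖₂² + ‖g‖₂²`, so `‖g‖_∞ ≲ K^{1/2}`.
Writing the cubic density as `(β/3 g² + Σ α_j f_j²) g`, its integral is at most
`‖g‖_∞ (β/3 ‖g‖₂² + Σ α_j ‖f_j‖₂²) ≲ K^{3/2}`, hence `λ² ≤ C K³` on `A_λ` and
`I_λ ≥ (λ²/C)^{1/3}`. Since `sInf ∅ = 0`, one also needs `A_λ ≠ ∅`: take every component
equal to a suitable multiple of a bump function.
-/

open MeasureTheory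

/-- Membership in the Sobolev space `H¹(ℝ)` (for differentiable representatives). -/
def H1 (f : ℝ → ℝ) : Prop :=
  Differentiable ℝ f ∧ MemLp f 2 (volume : Measure ℝ) ∧
    MemLp (deriv f) 2 (volume : Measure ℝ)

open Filter Topology Set

namespace H1

variable {f : ℝ → ℝ}

lemma integrable_sq (hf : H1 f) : Integrable (fun x => f x ^ 2) := hf.2.1.integrable_sq

lemma integrable_deriv_sq (hf : H1 f) : Integrable (fun x => deriv f x ^ 2) :=
  hf.2.2.integrable_sq

lemma integral_mul_deriv_sq_add_mul_sq (hf : H1 f) (a b : ℝ) :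
    ∫ x, (a * deriv f x ^ 2 + b * f x ^ 2) = a * (∫ x, deriv f x ^ 2) + b * ∫ x, f x ^ 2 := by
  rw [integral_add (hf.integrable_deriv_sq.const_mul a) (hf.integrable_sq.const_mul b),
    integral_const_mul, integral_const_mul]

lemma sq_le (hf : H1 f) (x : ℝ) : f x ^ 2 ≤ (∫ t, deriv f t ^ 2) + ∫ t, f t ^ 2 := by
  have hderiv : ∀ t, HasDerivAt (fun t => f t ^ 2) (2 * (f t * deriv f t)) t := fun t => by
    simpa [mul_assoc] using (hf.1 t).hasDerivAt.fun_pow 2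
  have hprod : Integrable (fun t => 2 * (f t * deriv f t)) :=
    (hf.2.1.integrable_mul hf.2.2).const_mul 2
  have hsum : Integrable (fun t => deriv f t ^ 2 + f t ^ 2) :=
    hf.integrable_deriv_sq.add hf.integrable_sq
  have hlim : Tendsto (fun t => f t ^ 2) atBot (𝓝 0) :=
    tendsto_zero_of_hasDerivAt_of_integrableOn_Iic (a := x) (fun t _ => hderiv t)
      hprod.integrableOn hf.integrable_sq.integrableOn
  calc f x ^ 2 = ∫ t in Iic x, 2 * (f t * deriv f t) := by
        rw [integral_Iic_of_hasDerivAt_of_tendsto' (fun t _ => hderiv t) hprod.integrableOn hlim,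
          sub_zero]
    _ ≤ ∫ t in Iic x, (deriv f t ^ 2 + f t ^ 2) :=
        setIntegral_mono hprod.integrableOn hsum.integrableOn fun t => by
          nlinarith [sq_nonneg (f t - deriv f t)]
    _ ≤ ∫ t, (deriv f t ^ 2 + f t ^ 2) :=
        setIntegral_le_integral hsum (Eventually.of_forall fun t => by positivity)
    _ = _ := integral_add hf.integrable_deriv_sq hf.integrable_sq

lemma const_mul (hf : H1 f) (a : ℝ) : H1 (fun x => a * f x) := by
  refine ⟨hf.1.const_mul a, hf.2.1.const_mul a, ?_⟩
  simpa [deriv_const_mul_field'] using hf.2.2.const_mul a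

lemma of_contDiff_of_hasCompactSupport (hf : ContDiff ℝ 1 f) (hc : HasCompactSupport f) : H1 f :=
  ⟨hf.differentiable one_ne_zero, hf.continuous.memLp_of_hasCompactSupport hc,
    (hf.continuous_deriv le_rfl).memLp_of_hasCompactSupport hc.deriv⟩

end H1

lemma exists_H1_integral_pow_three_pos : ∃ φ : ℝ → ℝ, H1 φ ∧ 0 < ∫ x, φ x ^ 3 := by
  let b : ContDiffBump (0 : ℝ) := ⟨1, 2, one_pos, one_lt_two⟩
  refine ⟨b, .of_contDiff_of_hasCompactSupport b.contDiff b.hasCompactSupport, ?_⟩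
  refine (b.continuous.pow 3).integral_pos_of_hasCompactSupport_nonneg_nonzero
    (b.hasCompactSupport.comp_left (g := (· ^ 3)) (zero_pow three_ne_zero))
    (fun x => pow_nonneg b.nonneg 3) (x := 0) ?_
  simp [b.one_of_mem_closedBall (Metric.mem_closedBall_self b.rIn_pos.le)]

lemma integral_mul_le_of_abs_le {X : Type*} [MeasurableSpace X] {μ : Measure X} {h g : X → ℝ}
    {s : ℝ} (hh : Integrable h μ) (hh0 : 0 ≤ h) (hg : AEStronglyMeasurable g μ)
    (hgs : ∀ x, |g x| ≤ s) : ∫ x, h x * g x ∂μ ≤ s * ∫ x, h x ∂μ := by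
  rw [← integral_const_mul]
  refine integral_mono (hh.mul_bdd hg (Eventually.of_forall hgs)) (hh.const_mul s) fun x => ?_
  simpa [mul_comm] using mul_le_mul_of_nonneg_left (le_of_abs_le (hgs x)) (hh0 x)

section Functionals

variable {N : ℕ}

noncomputable def quadraticFunctional (σ γ cτ : ℝ) (f : Fin N → ℝ → ℝ) (g : ℝ → ℝ) : ℝ :=
  (∑ j, ∫ x, (deriv (f j) x ^ 2 + σ * f j x ^ 2)) + ∫ x, (γ * deriv g x ^ 2 + cτ * g x ^ 2)

noncomputable def cubicFunctional (β : ℝ) (α : Fin N → ℝ) (f : Fin N → ℝ → ℝ) (g : ℝ → ℝ) : ℝ :=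
  ∫ x, (β / 3 * g x ^ 3 + (∑ j, α j * f j x ^ 2) * g x)

variable {σ γ cτ β : ℝ} {α : Fin N → ℝ} {f : Fin N → ℝ → ℝ} {g : ℝ → ℝ}

lemma quadraticFunctional_eq (hf : ∀ j, H1 (f j)) (hg : H1 g) :
    quadraticFunctional σ γ cτ f g =
      (∑ j, ((∫ x, deriv (f j) x ^ 2) + σ * ∫ x, f j x ^ 2)) +
        (γ * (∫ x, deriv g x ^ 2) + cτ * ∫ x, g x ^ 2) := by
  rw [quadraticFunctional, hg.integral_mul_deriv_sq_add_mul_sq]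
  congr 1
  exact Finset.sum_congr rfl fun j _ => by
    simpa using (hf j).integral_mul_deriv_sq_add_mul_sq 1 σ

lemma mul_integral_sq_le_quadraticFunctional (hσ : 0 ≤ σ) (hγ : 0 ≤ γ) (hc : 0 ≤ cτ)
    (hf : ∀ j, H1 (f j)) (hg : H1 g) (j : Fin N) :
    σ * ∫ x, f j x ^ 2 ≤ quadraticFunctional σ γ cτ f g := by
  have hterm : ∀ i, 0 ≤ (∫ x, deriv (f i) x ^ 2) + σ * ∫ x, f i x ^ 2 := fun i => by positivity
  have hj := Finset.single_le_sum (fun i _ => hterm i) (Finset.mem_univ j)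
  have hg0 : 0 ≤ γ * (∫ x, deriv g x ^ 2) + cτ * ∫ x, g x ^ 2 := by positivity
  have hf0 : 0 ≤ ∫ x, deriv (f j) x ^ 2 := by positivity
  rw [quadraticFunctional_eq hf hg]
  linarith

lemma mul_integral_deriv_sq_add_mul_integral_sq_le_quadraticFunctional (hσ : 0 ≤ σ)
    (hf : ∀ j, H1 (f j)) (hg : H1 g) :
    γ * (∫ x, deriv g x ^ 2) + cτ * ∫ x, g x ^ 2 ≤ quadraticFunctional σ γ cτ f g := by
  rw [quadraticFunctional_eq hf hg, le_add_iff_nonneg_left]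
  exact Finset.sum_nonneg fun i _ => by positivity

lemma quadraticFunctional_nonneg (hσ : 0 ≤ σ) (hγ : 0 ≤ γ) (hc : 0 ≤ cτ) (hf : ∀ j, H1 (f j))
    (hg : H1 g) : 0 ≤ quadraticFunctional σ γ cτ f g :=
  le_trans (by positivity)
    (mul_integral_deriv_sq_add_mul_integral_sq_le_quadraticFunctional hσ hf hg)

lemma cubicFunctional_le (hf : ∀ j, H1 (f j)) (hg : H1 g) (hβ : 0 ≤ β) (hα : ∀ j, 0 ≤ α j) :
    cubicFunctional β α f g ≤ √((∫ x, deriv g x ^ 2) + ∫ x, g x ^ 2) *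
      (β / 3 * (∫ x, g x ^ 2) + ∑ j, α j * ∫ x, f j x ^ 2) := by
  have hint : ∀ j ∈ Finset.univ, Integrable (fun x => α j * f j x ^ 2) :=
    fun j _ => (hf j).integrable_sq.const_mul _
  calc cubicFunctional β α f g
      = ∫ x, (β / 3 * g x ^ 2 + ∑ j, α j * f j x ^ 2) * g x := by
        simp only [cubicFunctional]; congr 1; ext x; ring
    _ ≤ √((∫ x, deriv g x ^ 2) + ∫ x, g x ^ 2) * ∫ x, (β / 3 * g x ^ 2 + ∑ j, α j * f j x ^ 2) :=
        integral_mul_le_of_abs_le ((hg.integrable_sq.const_mul _).add (integrable_finsetSum _ hint))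
          (fun x => add_nonneg (by positivity)
            (Finset.sum_nonneg fun j _ => mul_nonneg (hα j) (sq_nonneg _)))
          hg.1.continuous.aestronglyMeasurable fun x => Real.abs_le_sqrt (hg.sq_le x)
    _ = _ := by
        rw [integral_add (hg.integrable_sq.const_mul _) (integrable_finsetSum _ hint),
          integral_const_mul, integral_finsetSum _ hint]
        simp only [integral_const_mul]

lemma sq_cubicFunctional_le (hσ : 0 < σ) (hγ : 0 < γ) (hc : 0 < cτ) (hβ : 0 ≤ β)
    (hα : ∀ j, 0 ≤ α j) (hf : ∀ j, H1 (f j)) (hg : H1 g) (h0 : 0 ≤ cubicFunctional β α f g) :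
    cubicFunctional β α f g ^ 2 ≤
      (γ⁻¹ + cτ⁻¹) * (β / (3 * cτ) + (∑ j, α j) / σ) ^ 2 * quadraticFunctional σ γ cτ f g ^ 3 := by
  set K := quadraticFunctional σ γ cτ f g
  set M := (∫ x, deriv g x ^ 2) + ∫ x, g x ^ 2
  set Q := β / 3 * (∫ x, g x ^ 2) + ∑ j, α j * ∫ x, f j x ^ 2
  have hgK := mul_integral_deriv_sq_add_mul_integral_sq_le_quadraticFunctional hσ.le hf hg
    (γ := γ) (cτ := cτ)
  have hfK := mul_integral_sq_le_quadraticFunctional hσ.le hγ.le hc.le hf hg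
  have hu0 : 0 ≤ γ * ∫ x, deriv g x ^ 2 := by positivity
  have hv0 : 0 ≤ cτ * ∫ x, g x ^ 2 := by positivity
  have hK : 0 ≤ K := quadraticFunctional_nonneg hσ.le hγ.le hc.le hf hg
  have hM : M ≤ (γ⁻¹ + cτ⁻¹) * K := by
    have hu : ∫ x, deriv g x ^ 2 ≤ γ⁻¹ * K := (le_inv_mul_iff₀ hγ).2 (by linarith)
    have hv : ∫ x, g x ^ 2 ≤ cτ⁻¹ * K := (le_inv_mul_iff₀ hc).2 (by linarith)
    rw [add_mul]
    exact add_le_add hu hv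
  have hQ0 : 0 ≤ Q := add_nonneg (by positivity)
    (Finset.sum_nonneg fun j _ => mul_nonneg (hα j) (by positivity))
  have hQ : Q ≤ (β / (3 * cτ) + (∑ j, α j) / σ) * K := by
    have hv : β / 3 * ∫ x, g x ^ 2 ≤ β / (3 * cτ) * K :=
      calc β / 3 * ∫ x, g x ^ 2 = β / (3 * cτ) * (cτ * ∫ x, g x ^ 2) := by field_simp
        _ ≤ β / (3 * cτ) * K := by gcongr; linarith
    have hq : ∑ j, α j * ∫ x, f j x ^ 2 ≤ (∑ j, α j) / σ * K := by
      rw [Finset.sum_div, Finset.sum_mul]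
      refine Finset.sum_le_sum fun j _ => ?_
      calc α j * ∫ x, f j x ^ 2 = α j / σ * (σ * ∫ x, f j x ^ 2) := by field_simp
        _ ≤ α j / σ * K := by
          have := hα j
          gcongr
          exact hfK j
    rw [add_mul]
    exact add_le_add hv hq
  calc cubicFunctional β α f g ^ 2 ≤ (√M * Q) ^ 2 :=
        pow_le_pow_left₀ h0 (cubicFunctional_le hf hg hβ hα) 2
    _ = M * Q ^ 2 := by rw [mul_pow, Real.sq_sqrt (by positivity)]
    _ ≤ (γ⁻¹ + cτ⁻¹) * K * ((β / (3 * cτ) + (∑ j, α j) / σ) * K) ^ 2 := by gcongr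
    _ = _ := by ring

lemma exists_cubicFunctional_eq (hN : 0 < N) (hβ : 0 ≤ β) (hα : ∀ j, 0 < α j) {lam : ℝ}
    (hlam : 0 ≤ lam) :
    ∃ (f : Fin N → ℝ → ℝ) (g : ℝ → ℝ), (∀ j, H1 (f j)) ∧ H1 g ∧ cubicFunctional β α f g = lam := by
  obtain ⟨φ, hφ, hφ3⟩ := exists_H1_integral_pow_three_pos
  have : Nonempty (Fin N) := ⟨⟨0, hN⟩⟩
  have hc : 0 < (β / 3 + ∑ j, α j) * ∫ x, φ x ^ 3 := by
    have := Finset.sum_pos (fun j _ => hα j) Finset.univ_nonempty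
    positivity
  set a := (lam / ((β / 3 + ∑ j, α j) * ∫ x, φ x ^ 3)) ^ ((3 : ℕ)⁻¹ : ℝ)
  refine ⟨fun _ x => a * φ x, fun x => a * φ x, fun _ => hφ.const_mul a, hφ.const_mul a, ?_⟩
  calc cubicFunctional β α (fun _ x => a * φ x) (fun x => a * φ x)
      = ∫ x, a ^ 3 * (β / 3 + ∑ j, α j) * φ x ^ 3 := by
        simp only [cubicFunctional, add_mul, mul_add, Finset.mul_sum, Finset.sum_mul]
        ring_nf
    _ = a ^ 3 * ((β / 3 + ∑ j, α j) * ∫ x, φ x ^ 3) := by rw [integral_const_mul]; ring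
    _ = lam := by
        rw [Real.rpow_inv_natCast_pow (by positivity) three_ne_zero, div_mul_cancel₀ _ hc.ne']

end Functionals

theorem stmt_3 (N : ℕ) (hN : 1 ≤ N) (σ γ cτ β lam : ℝ) (α : Fin N → ℝ)
    (hσ : 0 < σ) (hγ : 0 < γ) (hc : 0 < cτ) (hβ : 0 ≤ β) (hα : ∀ j, 0 < α j)
    (hlam : 0 < lam) :
    0 < sInf { k : ℝ |
      ∃ f : Fin N → ℝ → ℝ, ∃ g : ℝ → ℝ,
        (∀ j, H1 (f j)) ∧ H1 g ∧
        (∫ x : ℝ, (β / 3 * g x ^ 3 + (∑ j, α j * f j x ^ 2) * g x)) = lam ∧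
        k = (∑ j, ∫ x : ℝ, (deriv (f j) x ^ 2 + σ * f j x ^ 2))
            + ∫ x : ℝ, (γ * deriv g x ^ 2 + cτ * g x ^ 2) } := by
  set C := (γ⁻¹ + cτ⁻¹) * (β / (3 * cτ) + (∑ j, α j) / σ) ^ 2
  have hC : 0 < C := by
    have : Nonempty (Fin N) := ⟨⟨0, hN⟩⟩
    have := Finset.sum_pos (fun j _ => hα j) Finset.univ_nonempty
    positivity
  obtain ⟨f, g, hf, hg, hF⟩ := exists_cubicFunctional_eq hN hβ hα hlam.le
  refine lt_of_lt_of_le (by positivity : 0 < (lam ^ 2 / C) ^ ((3 : ℕ)⁻¹ : ℝ))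
    (le_csInf ⟨_, f, g, hf, hg, hF, rfl⟩ ?_)
  rintro k ⟨f, g, hf, hg, hF, rfl⟩
  replace hF : cubicFunctional β α f g = lam := hF
  have hK := sq_cubicFunctional_le hσ hγ hc hβ (fun j => (hα j).le) hf hg (hF ▸ hlam.le)
  refine le_of_pow_le_pow_left₀ three_ne_zero
    (quadraticFunctional_nonneg hσ.le hγ.le hc.le hf hg) ?_
  rw [Real.rpow_inv_natCast_pow (by positivity) three_ne_zero, div_le_iff₀' hC]
  exact hF ▸ hK
end

section
/- Let σ > 0 and α > 0. Suppose Φ, Ψ ∈ H^1(ℝ) are continuous, satisfy the distributional equation −Φ'' + σΦ = αΨΦ, and Ψ(x) → 0 as |x| → ∞. Then there exist constants C > 0 and δ > 0 such that ∫_ℝ e^{δ|x|} Φ(x)^2 dx < ∞. -/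
/-!
Put `u = Φ²`. The equation gives `u'' = 2Φ'² + 2(σ - αΨ)Φ²`, so `u'' ≥ σ u` wherever
`αΨ ≤ σ/2`, that is, outside a compact set. Since `u`, `u'` and `u''` are integrable, `u` and
`u'` vanish at `±∞`. With `k = √σ`, the function `e^{-kx}(u' + k u)` is then nondecreasing for
large `x` and tends to `0`, so `u' + k u ≤ 0` there, i.e. `e^{kx} u` is nonincreasing:
`u = O(e^{-k|x|})`. Hence `e^{δ|x|} Φ²` is integrable for `δ = k/2`.
-/

open MeasureTheory Filter Set Asymptotics Real Topology

lemma integrable_exp_neg_mul_abs {c : ℝ} (hc : 0 < c) :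
    Integrable (fun x : ℝ => exp (-c * |x|)) := by
  refine (Continuous.locallyIntegrable (by fun_prop)).integrable_of_isBigO_atBot_atTop
    (g := fun x => exp (c * x)) ?_ ⟨Iic 0, Iic_mem_atBot 0, integrableOn_exp_mul_Iic hc 0⟩
    (g' := fun x => exp (-c * x)) ?_
    ⟨Ioi 0, Ioi_mem_atTop 0, integrableOn_exp_mul_Ioi (neg_neg_iff_pos.2 hc) 0⟩
  · refine EventuallyEq.isBigO ((eventually_le_atBot 0).mono fun x hx => ?_)
    simp only [abs_of_nonpos hx, mul_neg, neg_mul, neg_neg]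
  · refine EventuallyEq.isBigO ((eventually_ge_atTop 0).mono fun x hx => ?_)
    simp only [abs_of_nonneg hx]

lemma Continuous.exists_forall_norm_le_of_tendsto_cocompact {X E : Type*} [TopologicalSpace X]
    [NormedAddCommGroup E] {f : X → E} (hf : Continuous f)
    (hf0 : Tendsto f (cocompact X) (𝓝 0)) : ∃ C, ∀ x, ‖f x‖ ≤ C :=
  let f₀ : ZeroAtInftyContinuousMap X E := ⟨⟨f, hf⟩, hf0⟩
  ⟨‖f₀.toBCF‖, f₀.toBCF.norm_coe_le_norm⟩

lemma tendsto_cocompact_zero_of_hasDerivAt {E : Type*} [NormedAddCommGroup E] [NormedSpace ℝ E]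
    {f f' : ℝ → E} (hderiv : ∀ x, HasDerivAt f (f' x) x)
    (hf' : Integrable f') (hf : Integrable f) : Tendsto f (cocompact ℝ) (𝓝 0) := by
  rw [cocompact_eq_atBot_atTop]
  exact (tendsto_zero_of_hasDerivAt_of_integrableOn_Iic (a := 0) (fun x _ => hderiv x)
    hf'.integrableOn hf.integrableOn).sup
    (tendsto_zero_of_hasDerivAt_of_integrableOn_Ioi (a := 0) (fun x _ => hderiv x)
      hf'.integrableOn hf.integrableOn)

section Comparison

variable {u u' u'' : ℝ → ℝ} {k R : ℝ}

lemma deriv_add_mul_nonpos_of_sq_mul_le_deriv2 (hk : 0 < k)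
    (hu : ∀ x, HasDerivAt u (u' x) x) (hu' : ∀ x, HasDerivAt u' (u'' x) x)
    (hu0 : Tendsto u atTop (𝓝 0)) (hu'0 : Tendsto u' atTop (𝓝 0))
    (hR : ∀ x ≥ R, k ^ 2 * u x ≤ u'' x) {x : ℝ} (hx : R ≤ x) : u' x + k * u x ≤ 0 := by
  set g : ℝ → ℝ := fun y => exp (-k * y) * (u' y + k * u y)
  have hg : ∀ y, HasDerivAt g (exp (-k * y) * (u'' y - k ^ 2 * u y)) y := by
    intro y
    refine ((((hasDerivAt_id' y).const_mul (-k)).exp).mul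
      ((hu' y).fun_add ((hu y).const_mul k))).congr_deriv ?_
    ring
  have hmono : MonotoneOn g (Ici R) := by
    refine monotoneOn_of_hasDerivWithinAt_nonneg (convex_Ici R)
      (fun y _ => (hg y).continuousAt.continuousWithinAt)
      (fun y _ => (hg y).hasDerivWithinAt) fun y hy => ?_
    rw [interior_Ici] at hy
    exact mul_nonneg (exp_pos _).le (sub_nonneg.2 (hR y hy.le))
  have hg0 : Tendsto g atTop (𝓝 0) := by
    have hexp : Tendsto (fun y => exp (-k * y)) atTop (𝓝 0) :=
      tendsto_exp_atBot.comp (tendsto_id.const_mul_atTop_of_neg (neg_neg_iff_pos.2 hk))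
    simpa only [mul_zero, add_zero] using hexp.mul (hu'0.add (hu0.const_mul k))
  have hgx : g x ≤ 0 :=
    ge_of_tendsto hg0 ((eventually_ge_atTop x).mono fun y hy => hmono hx (hx.trans hy) hy)
  exact nonpos_of_mul_nonpos_right hgx (exp_pos _)

lemma antitoneOn_exp_mul_of_sq_mul_le_deriv2 (hk : 0 < k)
    (hu : ∀ x, HasDerivAt u (u' x) x) (hu' : ∀ x, HasDerivAt u' (u'' x) x)
    (hu0 : Tendsto u atTop (𝓝 0)) (hu'0 : Tendsto u' atTop (𝓝 0))
    (hR : ∀ x ≥ R, k ^ 2 * u x ≤ u'' x) :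
    AntitoneOn (fun x => exp (k * x) * u x) (Ici R) := by
  have hg : ∀ y, HasDerivAt (fun x => exp (k * x) * u x) (exp (k * y) * (u' y + k * u y)) y :=
    fun y => ((((hasDerivAt_id' y).const_mul k).exp).mul (hu y)).congr_deriv (by ring)
  refine antitoneOn_of_hasDerivWithinAt_nonpos (convex_Ici R)
    (fun y _ => (hg y).continuousAt.continuousWithinAt) (fun y _ => (hg y).hasDerivWithinAt)
    fun y hy => ?_
  rw [interior_Ici] at hy
  exact mul_nonpos_of_nonneg_of_nonpos (exp_pos _).le
    (deriv_add_mul_nonpos_of_sq_mul_le_deriv2 hk hu hu' hu0 hu'0 hR hy.le)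

lemma isBigO_atTop_exp_neg_of_sq_mul_le_deriv2 (hk : 0 < k)
    (hu : ∀ x, HasDerivAt u (u' x) x) (hu' : ∀ x, HasDerivAt u' (u'' x) x)
    (hu0 : Tendsto u atTop (𝓝 0)) (hu'0 : Tendsto u' atTop (𝓝 0))
    (hsub : ∀ᶠ x in atTop, k ^ 2 * u x ≤ u'' x) (hnonneg : ∀ x, 0 ≤ u x) :
    u =O[atTop] fun x => exp (-k * x) := by
  obtain ⟨R, hR⟩ := eventually_atTop.1 hsub
  have hanti := antitoneOn_exp_mul_of_sq_mul_le_deriv2 hk hu hu' hu0 hu'0 hR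
  refine IsBigO.of_bound (exp (k * R) * u R) ((eventually_ge_atTop R).mono fun x hx => ?_)
  have hx' : exp (k * x) * u x ≤ exp (k * R) * u R := hanti self_mem_Ici hx hx
  rw [norm_of_nonneg (hnonneg x), norm_of_nonneg (exp_pos _).le]
  calc u x = exp (-k * x) * (exp (k * x) * u x) := by
        rw [← mul_assoc, ← exp_add, neg_mul, neg_add_cancel, exp_zero, one_mul]
    _ ≤ exp (-k * x) * (exp (k * R) * u R) := mul_le_mul_of_nonneg_left hx' (exp_pos _).le
    _ = exp (k * R) * u R * exp (-k * x) := mul_comm _ _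

lemma isBigO_atBot_exp_of_sq_mul_le_deriv2 (hk : 0 < k)
    (hu : ∀ x, HasDerivAt u (u' x) x) (hu' : ∀ x, HasDerivAt u' (u'' x) x)
    (hu0 : Tendsto u atBot (𝓝 0)) (hu'0 : Tendsto u' atBot (𝓝 0))
    (hsub : ∀ᶠ x in atBot, k ^ 2 * u x ≤ u'' x) (hnonneg : ∀ x, 0 ≤ u x) :
    u =O[atBot] fun x => exp (k * x) := by
  have hrefl := isBigO_atTop_exp_neg_of_sq_mul_le_deriv2 (u := fun x => u (-x))
    (u' := fun x => -u' (-x)) (u'' := fun x => u'' (-x)) hk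
    (fun x => ((hu (-x)).comp x (hasDerivAt_neg' x)).congr_deriv (mul_neg_one _))
    (fun x => ((hu' (-x)).comp x (hasDerivAt_neg' x)).neg.congr_deriv (by ring))
    (hu0.comp tendsto_neg_atTop_atBot) (by simpa using (hu'0.comp tendsto_neg_atTop_atBot).neg)
    (tendsto_neg_atTop_atBot.eventually hsub) fun x => hnonneg (-x)
  simpa only [Function.comp_def, neg_neg, neg_mul_neg] using
    hrefl.comp_tendsto tendsto_neg_atBot_atTop

lemma isBigO_cocompact_exp_neg_abs_of_sq_mul_le_deriv2 (hk : 0 < k)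
    (hu : ∀ x, HasDerivAt u (u' x) x) (hu' : ∀ x, HasDerivAt u' (u'' x) x)
    (hu0 : Tendsto u (cocompact ℝ) (𝓝 0)) (hu'0 : Tendsto u' (cocompact ℝ) (𝓝 0))
    (hsub : ∀ᶠ x in cocompact ℝ, k ^ 2 * u x ≤ u'' x) (hnonneg : ∀ x, 0 ≤ u x) :
    u =O[cocompact ℝ] fun x => exp (-k * |x|) := by
  rw [cocompact_eq_atBot_atTop] at *
  refine IsBigO.sup ?_ ?_
  · refine (isBigO_atBot_exp_of_sq_mul_le_deriv2 hk hu hu' (hu0.mono_left le_sup_left)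
      (hu'0.mono_left le_sup_left) (hsub.filter_mono le_sup_left) hnonneg).trans_eventuallyEq
      ((eventually_le_atBot 0).mono fun x hx => ?_)
    simp only [abs_of_nonpos hx, mul_neg, neg_mul, neg_neg]
  · refine (isBigO_atTop_exp_neg_of_sq_mul_le_deriv2 hk hu hu' (hu0.mono_left le_sup_right)
      (hu'0.mono_left le_sup_right) (hsub.filter_mono le_sup_right) hnonneg).trans_eventuallyEq
      ((eventually_ge_atTop 0).mono fun x hx => ?_)
    simp only [abs_of_nonneg hx]

end Comparison

lemma sq_isBigO_cocompact_exp_neg_abs {σ α : ℝ} (hσ : 0 < σ) {Φ Ψ : ℝ → ℝ}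
    (hΦ : ContDiff ℝ 2 Φ) (hΨc : Continuous Ψ)
    (hΦ2 : MemLp Φ 2 volume) (hΦ'2 : MemLp (deriv Φ) 2 volume)
    (heq : ∀ x, -(deriv (deriv Φ) x) + σ * Φ x = α * Ψ x * Φ x)
    (hΨ0 : Tendsto Ψ (cocompact ℝ) (𝓝 0)) :
    (fun x => Φ x ^ 2) =O[cocompact ℝ] fun x => exp (-√σ * |x|) := by
  have hΦ' : ∀ x, HasDerivAt Φ (deriv Φ x) x :=
    fun x => (hΦ.differentiable two_ne_zero x).hasDerivAt
  have hΦ'' : ∀ x, HasDerivAt (deriv Φ) ((σ - α * Ψ x) * Φ x) x :=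
    fun x => (hΦ.differentiable_deriv_two x).hasDerivAt.congr_deriv (by linarith [heq x])
  set u' : ℝ → ℝ := fun x => 2 * (Φ x * deriv Φ x)
  set u'' : ℝ → ℝ := fun x => 2 * (deriv Φ x ^ 2 + (σ - α * Ψ x) * Φ x ^ 2)
  have hu : ∀ x, HasDerivAt (fun x => Φ x ^ 2) (u' x) x :=
    fun x => ((hΦ' x).pow 2).congr_deriv (by simp only [u']; ring)
  have hu' : ∀ x, HasDerivAt u' (u'' x) x :=
    fun x => (((hΦ' x).mul (hΦ'' x)).const_mul 2).congr_deriv (by simp only [u'']; ring)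
  obtain ⟨C, hC⟩ := hΨc.exists_forall_norm_le_of_tendsto_cocompact hΨ0
  have hint : Integrable (fun x => Φ x ^ 2) := hΦ2.integrable_sq
  have hint' : Integrable u' := (hΦ2.integrable_mul hΦ'2).const_mul 2
  have hint'' : Integrable u'' := by
    refine (hΦ'2.integrable_sq.add
      (hint.bdd_mul (c := ‖σ‖ + ‖α‖ * C) (by fun_prop) ?_)).const_mul 2
    refine Eventually.of_forall fun x => (norm_sub_le _ _).trans ?_
    rw [norm_mul]
    gcongr
    exact hC x
  have hsub : ∀ᶠ x in cocompact ℝ, √σ ^ 2 * Φ x ^ 2 ≤ u'' x := by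
    have hαΨ : ∀ᶠ x in cocompact ℝ, α * Ψ x < σ / 2 :=
      (tendsto_order.1 (by simpa using hΨ0.const_mul α)).2 _ (half_pos hσ)
    filter_upwards [hαΨ] with x hx
    rw [sq_sqrt hσ.le]
    nlinarith [sq_nonneg (deriv Φ x), sq_nonneg (Φ x)]
  exact isBigO_cocompact_exp_neg_abs_of_sq_mul_le_deriv2 (sqrt_pos.2 hσ) hu hu'
    (tendsto_cocompact_zero_of_hasDerivAt hu hint' hint)
    (tendsto_cocompact_zero_of_hasDerivAt hu' hint'' hint') hsub fun x => sq_nonneg _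

theorem stmt_11_general (σ α : ℝ) (hσ : 0 < σ)
    (Φ Ψ : ℝ → ℝ)
    (hΦ : ContDiff ℝ 2 Φ) (hΨc : Continuous Ψ)
    (hΦ2 : MemLp Φ 2 (volume : Measure ℝ))
    (hΦ'2 : MemLp (deriv Φ) 2 (volume : Measure ℝ))
    (heq : ∀ x, -(deriv (deriv Φ) x) + σ * Φ x = α * Ψ x * Φ x)
    (hΨ0 : Tendsto Ψ (cocompact ℝ) (nhds 0)) :
    ∃ δ > 0, ∃ C > 0,
      (Integrable (fun x : ℝ => Real.exp (δ * |x|) * Φ x ^ 2) (volume : Measure ℝ)) ∧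
      ∫ x : ℝ, Real.exp (δ * |x|) * Φ x ^ 2 ≤ C := by
  have hδ : 0 < √σ / 2 := half_pos (sqrt_pos.2 hσ)
  have hdecay : (fun x => exp (√σ / 2 * |x|) * Φ x ^ 2) =O[cocompact ℝ]
      fun x => exp (-(√σ / 2) * |x|) :=
    ((isBigO_refl _ _).mul
      (sq_isBigO_cocompact_exp_neg_abs hσ hΦ hΨc hΦ2 hΦ'2 heq hΨ0)).congr_right
        fun x => by rw [← exp_add]; ring_nf
  have hint : Integrable fun x => exp (√σ / 2 * |x|) * Φ x ^ 2 :=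
    (Continuous.locallyIntegrable (by fun_prop)).integrable_of_isBigO_cocompact hdecay
      ((integrable_exp_neg_mul_abs hδ).integrableAtFilter _)
  exact ⟨√σ / 2, hδ, |∫ x, exp (√σ / 2 * |x|) * Φ x ^ 2| + 1, by positivity, hint,
    (le_abs_self _).trans (lt_add_one _).le⟩

theorem stmt_11 (σ α : ℝ) (hσ : 0 < σ) (hα : 0 < α)
    (Φ Ψ : ℝ → ℝ)
    (hΦ : ContDiff ℝ 2 Φ) (hΨc : Continuous Ψ)
    (hΦ2 : MemLp Φ 2 (volume : Measure ℝ))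
    (hΦ'2 : MemLp (deriv Φ) 2 (volume : Measure ℝ))
    (hΨ2 : MemLp Ψ 2 (volume : Measure ℝ))
    (heq : ∀ x, -(deriv (deriv Φ) x) + σ * Φ x = α * Ψ x * Φ x)
    (hΨ0 : Tendsto Ψ (cocompact ℝ) (nhds 0)) :
    ∃ δ > 0, ∃ C > 0,
      (Integrable (fun x : ℝ => Real.exp (δ * |x|) * Φ x ^ 2) (volume : Measure ℝ)) ∧
      ∫ x : ℝ, Real.exp (δ * |x|) * Φ x ^ 2 ≤ C :=
  stmt_11_general σ α hσ Φ Ψ hΦ hΨc hΦ2 hΦ'2 heq hΨ0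
end

section
/- Suppose (Φ_1,…,Φ_N,Ψ) minimizes K over the constraint set {∫F = λ} (with K, F as in the variational problem, σ, γ, c_τ > 0, β ≥ 0, α_j > 0, λ > 0), and suppose the Euler–Lagrange system −Φ_j'' + σΦ_j = κ α_j Ψ Φ_j (j=1,…,N), −γΨ'' + c_τΨ = (κ/2)(βΨ^2 + Σ_j α_j Φ_j^2) holds with multiplier κ ∈ ℝ and K(Φ_1,…,Φ_N,Ψ) = I_λ. Then κ = (2/(3λ)) I_λ > 0. -/
open MeasureTheory Filter

/-- Integration by parts on ℝ: `∫ f'' f = - ∫ f'^2` given decay of `f f'`. -/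
lemma ibp_aux (f : ℝ → ℝ) (hf : ContDiff ℝ (⊤ : ℕ∞) f)
    (h1 : Integrable (fun x : ℝ => deriv f x ^ 2) volume)
    (h2 : Integrable (fun x : ℝ => deriv (deriv f) x * f x) volume)
    (hd : Tendsto (fun x : ℝ => f x * deriv f x) (cocompact ℝ) (nhds 0)) :
    ∫ x : ℝ, deriv (deriv f) x * f x = - ∫ x : ℝ, deriv f x ^ 2 := by
  have hdiff : Differentiable ℝ f := hf.differentiable (by simp)
  have hdiff' : Differentiable ℝ (deriv f) :=
    (contDiff_infty_iff_deriv.mp (hf.of_le (by simp))).2.differentiable (by norm_num)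
  have hderiv : ∀ x : ℝ, HasDerivAt (fun x => f x * deriv f x)
      (deriv f x ^ 2 + deriv (deriv f) x * f x) x := by
    intro x
    have := ((hdiff x).hasDerivAt).mul ((hdiff' x).hasDerivAt)
    rw [show deriv f x ^ 2 + deriv (deriv f) x * f x
        = deriv f x * deriv f x + f x * deriv (deriv f) x by ring]
    exact this
  have hint : Integrable (fun x : ℝ => deriv f x ^ 2 + deriv (deriv f) x * f x) volume :=
    h1.add h2
  have hbot : Tendsto (fun x : ℝ => f x * deriv f x) atBot (nhds 0) :=
    hd.mono_left (by rw [cocompact_eq_atBot_atTop]; exact le_sup_left)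
  have htop : Tendsto (fun x : ℝ => f x * deriv f x) atTop (nhds 0) :=
    hd.mono_left (by rw [cocompact_eq_atBot_atTop]; exact le_sup_right)
  have h0 : ∫ x : ℝ, (deriv f x ^ 2 + deriv (deriv f) x * f x) = 0 := by
    rw [integral_of_hasDerivAt_of_tendsto hderiv hint hbot htop]; ring
  rw [integral_add h1 h2] at h0
  linarith

theorem stmt_17 (N : ℕ) (σ γ cτ β lam κ Ilam : ℝ) (α : Fin N → ℝ)
    (hσ : 0 < σ) (hγ : 0 < γ) (hc : 0 < cτ) (hβ : 0 ≤ β) (hα : ∀ j, 0 < α j)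
    (hlam : 0 < lam) (hIpos : 0 < Ilam)
    (Φ : Fin N → ℝ → ℝ) (Ψ : ℝ → ℝ)
    (hΦsm : ∀ j, ContDiff ℝ (⊤ : ℕ∞) (Φ j)) (hΨsm : ContDiff ℝ (⊤ : ℕ∞) Ψ)
    -- integrability of all the quantities appearing in the functionals
    (hi1 : ∀ j, Integrable (fun x : ℝ => deriv (Φ j) x ^ 2) volume)
    (hi2 : ∀ j, Integrable (fun x : ℝ => Φ j x ^ 2) volume)
    (hi3 : ∀ j, Integrable (fun x : ℝ => Ψ x * Φ j x ^ 2) volume)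
    (hi4 : Integrable (fun x : ℝ => deriv Ψ x ^ 2) volume)
    (hi5 : Integrable (fun x : ℝ => Ψ x ^ 2) volume)
    (hi6 : Integrable (fun x : ℝ => Ψ x ^ 3) volume)
    -- decay at infinity (so that integration by parts is justified)
    (hd1 : ∀ j, Tendsto (fun x : ℝ => Φ j x * deriv (Φ j) x) (cocompact ℝ) (nhds 0))
    (hd2 : Tendsto (fun x : ℝ => Ψ x * deriv Ψ x) (cocompact ℝ) (nhds 0))
    -- the Euler--Lagrange system
    (hELΦ : ∀ j, ∀ x : ℝ,
      -(deriv (deriv (Φ j)) x) + σ * Φ j x = κ * α j * Ψ x * Φ j x)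
    (hELΨ : ∀ x : ℝ,
      -(γ * deriv (deriv Ψ) x) + cτ * Ψ x
        = κ / 2 * (β * Ψ x ^ 2 + ∑ j, α j * Φ j x ^ 2))
    -- the constraint and the value of K
    (hF : (∫ x : ℝ, (β / 3 * Ψ x ^ 3 + (∑ j, α j * Φ j x ^ 2) * Ψ x)) = lam)
    (hKI : (∑ j, ∫ x : ℝ, (deriv (Φ j) x ^ 2 + σ * Φ j x ^ 2))
        + ∫ x : ℝ, (γ * deriv Ψ x ^ 2 + cτ * Ψ x ^ 2) = Ilam) :
    κ = 2 / (3 * lam) * Ilam ∧ 0 < κ := by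
  have hγ0 : (γ : ℝ) ≠ 0 := ne_of_gt hγ
  -- pointwise identities from the EL equations
  have hΦ'' : ∀ j, ∀ x : ℝ, deriv (deriv (Φ j)) x * Φ j x
      = σ * Φ j x ^ 2 - κ * α j * (Ψ x * Φ j x ^ 2) := by
    intro j x
    linear_combination (-(Φ j x)) * hELΦ j x
  have hΨ''γ : ∀ x : ℝ, γ * (deriv (deriv Ψ) x * Ψ x)
      = cτ * Ψ x ^ 2 - κ / 2 * (β * Ψ x ^ 3 + ∑ j, α j * (Ψ x * Φ j x ^ 2)) := by
    intro x
    have e : (∑ j, α j * Φ j x ^ 2) * Ψ x = ∑ j, α j * (Ψ x * Φ j x ^ 2) := by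
      rw [Finset.sum_mul]; exact Finset.sum_congr rfl fun j _ => by ring
    linear_combination (-(Ψ x)) * hELΨ x - κ / 2 * e
  -- integrability facts
  have hintΦ : ∀ j, Integrable (fun x : ℝ => deriv (deriv (Φ j)) x * Φ j x) volume := by
    intro j
    have e : (fun x : ℝ => deriv (deriv (Φ j)) x * Φ j x)
        = fun x => σ * Φ j x ^ 2 - κ * α j * (Ψ x * Φ j x ^ 2) := funext (hΦ'' j)
    rw [e]
    exact ((hi2 j).const_mul σ).sub ((hi3 j).const_mul _)
  have hsumint : Integrable (fun x : ℝ => ∑ j, α j * (Ψ x * Φ j x ^ 2)) volume := by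
    apply integrable_finset_sum
    intro j _
    exact (hi3 j).const_mul _
  have hint6 : Integrable
      (fun x : ℝ => β * Ψ x ^ 3 + ∑ j, α j * (Ψ x * Φ j x ^ 2)) volume :=
    (hi6.const_mul β).add hsumint
  have hint7 : Integrable
      (fun x : ℝ => κ / 2 * (β * Ψ x ^ 3 + ∑ j, α j * (Ψ x * Φ j x ^ 2))) volume :=
    hint6.const_mul _
  have hint8 : Integrable
      (fun x : ℝ => cτ * Ψ x ^ 2
        - κ / 2 * (β * Ψ x ^ 3 + ∑ j, α j * (Ψ x * Φ j x ^ 2))) volume :=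
    (hi5.const_mul cτ).sub hint7
  have hintΨ : Integrable (fun x : ℝ => deriv (deriv Ψ) x * Ψ x) volume := by
    have e : (fun x : ℝ => deriv (deriv Ψ) x * Ψ x)
        = fun x => γ⁻¹ * (cτ * Ψ x ^ 2
          - κ / 2 * (β * Ψ x ^ 3 + ∑ j, α j * (Ψ x * Φ j x ^ 2))) := by
      funext x
      rw [← hΨ''γ x, inv_mul_cancel_left₀ hγ0]
    rw [e]
    exact hint8.const_mul _
  -- integration by parts
  have ibpΦ : ∀ j, ∫ x : ℝ, deriv (deriv (Φ j)) x * Φ j x = - ∫ x : ℝ, deriv (Φ j) x ^ 2 :=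
    fun j => ibp_aux (Φ j) (hΦsm j) (hi1 j) (hintΦ j) (hd1 j)
  have ibpΨ : ∫ x : ℝ, deriv (deriv Ψ) x * Ψ x = - ∫ x : ℝ, deriv Ψ x ^ 2 :=
    ibp_aux Ψ hΨsm hi4 hintΨ hd2
  -- identity for each j
  have hIdΦ : ∀ j, (∫ x : ℝ, (deriv (Φ j) x ^ 2 + σ * Φ j x ^ 2))
      = κ * α j * ∫ x : ℝ, Ψ x * Φ j x ^ 2 := by
    intro j
    have e : ∫ x : ℝ, deriv (deriv (Φ j)) x * Φ j x
        = σ * (∫ x : ℝ, Φ j x ^ 2) - κ * α j * ∫ x : ℝ, Ψ x * Φ j x ^ 2 := by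
      have e0 : (fun x : ℝ => deriv (deriv (Φ j)) x * Φ j x)
          = fun x => σ * Φ j x ^ 2 - κ * α j * (Ψ x * Φ j x ^ 2) := funext (hΦ'' j)
      rw [e0, integral_sub ((hi2 j).const_mul σ) ((hi3 j).const_mul _),
        integral_const_mul, integral_const_mul]
    rw [integral_add (hi1 j) ((hi2 j).const_mul σ), integral_const_mul]
    rw [ibpΦ j] at e
    linarith
  -- identity for Ψ
  have hIdΨ : (∫ x : ℝ, (γ * deriv Ψ x ^ 2 + cτ * Ψ x ^ 2))
      = κ / 2 * (β * (∫ x : ℝ, Ψ x ^ 3)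
        + ∑ j, α j * ∫ x : ℝ, Ψ x * Φ j x ^ 2) := by
    have e : ∫ x : ℝ, γ * (deriv (deriv Ψ) x * Ψ x)
        = cτ * (∫ x : ℝ, Ψ x ^ 2) - κ / 2 * (β * (∫ x : ℝ, Ψ x ^ 3)
            + ∑ j, α j * ∫ x : ℝ, Ψ x * Φ j x ^ 2) := by
      have e0 : (fun x : ℝ => γ * (deriv (deriv Ψ) x * Ψ x))
          = fun x => cτ * Ψ x ^ 2
            - κ / 2 * (β * Ψ x ^ 3 + ∑ j, α j * (Ψ x * Φ j x ^ 2)) := funext hΨ''γ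
      rw [e0, integral_sub (hi5.const_mul cτ) hint7, integral_const_mul, integral_const_mul,
        integral_add (hi6.const_mul β) hsumint, integral_const_mul, integral_finset_sum]
      · simp_rw [integral_const_mul]
      · intro j _; exact (hi3 j).const_mul _
    rw [integral_const_mul, ibpΨ] at e
    rw [integral_add ((hi4).const_mul γ) ((hi5).const_mul cτ), integral_const_mul,
      integral_const_mul]
    linear_combination -e
  -- the constraint split
  have hlam' : β / 3 * (∫ x : ℝ, Ψ x ^ 3)
      + ∑ j, α j * ∫ x : ℝ, Ψ x * Φ j x ^ 2 = lam := by
    rw [← hF]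
    have e0 : (fun x : ℝ => (∑ j, α j * Φ j x ^ 2) * Ψ x)
        = fun x => ∑ j, α j * (Ψ x * Φ j x ^ 2) := by
      funext x; rw [Finset.sum_mul]; exact Finset.sum_congr rfl fun j _ => by ring
    have hi' : Integrable (fun x : ℝ => (∑ j, α j * Φ j x ^ 2) * Ψ x) volume := by
      rw [e0]; exact hsumint
    rw [integral_add (hi6.const_mul _) hi', integral_const_mul]
    congr 1
    rw [e0, integral_finset_sum]
    · simp_rw [integral_const_mul]
    · intro j _; exact (hi3 j).const_mul _
  -- rewrite the sum in K
  have hsum : (∑ j, ∫ x : ℝ, (deriv (Φ j) x ^ 2 + σ * Φ j x ^ 2))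
      = κ * ∑ j, α j * ∫ x : ℝ, Ψ x * Φ j x ^ 2 := by
    rw [Finset.mul_sum]
    exact Finset.sum_congr rfl fun j _ => by rw [hIdΦ j]; ring
  rw [hsum, hIdΨ] at hKI
  set A : ℝ := ∫ x : ℝ, Ψ x ^ 3 with hAdef
  set S : ℝ := ∑ j, α j * ∫ x : ℝ, Ψ x * Φ j x ^ 2 with hSdef
  -- now hKI : κ * S + κ/2 * (β * A + S) = Ilam, hlam' : β/3 * A + S = lam
  have h3 : 3 * lam * κ = 2 * Ilam := by
    linear_combination 2 * hKI - 3 * κ * hlam'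
  have h0 : (3 : ℝ) * lam ≠ 0 := by positivity
  have hκ : κ = 2 / (3 * lam) * Ilam := by
    field_simp [h0]
    linear_combination h3
  exact ⟨hκ, by rw [hκ]; positivity⟩
end
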